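/- arXiv:math/0302297 — 3 statements merged into one kernel-verified Lean document; each statement's English description precedes it below -/
import Mathlib

section
/- Let V : ℝⁿ → ℝⁿ be a C¹ vector field admitting a global flow Φ (i.e. Φ₀ = id and for every ρ the curve t ↦ Φ_t(ρ) is differentiable with derivative V(Φ_t(ρ))), and assume the flow is periodic with period T > 0, i.e. Φ_{t+T}(ρ) = Φ_t(ρ) for all t ∈ ℝ and ρ ∈ ℝⁿ. Let q : ℝⁿ → ℝ be continuous, and define the trajectory average ⟨q⟩(ρ) = (1/T) ∫_{-T/2}^{T/2} q(Φ_t(ρ)) dt and the function G₀(ρ) = (1/T) ( ∫_{-T/2}^{0} (t + T/2) q(Φ_t(ρ)) dt + ∫_{0}^{T/2} (t - T/2) q(Φ_t(ρ)) dt ). Then for every ρ ∈ ℝⁿ the function u ↦ G₀(Φ_u(ρ)) is differentiable at u = 0 and its derivative there equals q(ρ) − ⟨q⟩(ρ). (In the Hamiltonian case V = H_p this says H_p G₀ = q − ⟨q⟩.) -/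
/-!
Along the orbit, `G₀ (Φ u ρ) = (1/T) ∫ w(t) f(t + u) dt` with `f s = q (Φ s ρ)` and `w` the sawtooth
weight `t + T/2` on `[-T/2, 0]`, `t - T/2` on `[0, T/2]`. Differentiating in `u` is integration by
parts against `w`: since `w' = 1`, the interior contributes `-∫ f`, and the boundary terms are
`w(±T/2) = 0` at the ends and the jump `w(0⁻) - w(0⁺) = T` at `0`, which gives `T q ρ`.
-/

open intervalIntegral

theorem hasDerivAt_integral_comp_add {g : ℝ → ℝ} (hg : Continuous g) (a b x : ℝ) :
    HasDerivAt (fun u => ∫ t in a..b, g (t + u)) (g (b + x) - g (a + x)) x := by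
  have hprim (y : ℝ) : HasDerivAt (fun u => ∫ s in (0 : ℝ)..u, g s) (g y) y :=
    (hg.integral_hasStrictDerivAt 0 y).hasDerivAt
  have hsplit : (fun u => ∫ t in a..b, g (t + u)) =
      fun u => (∫ s in (0 : ℝ)..(u + b), g s) - ∫ s in (0 : ℝ)..(u + a), g s := by
    funext u
    rw [integral_comp_add_right (fun s => g s), integral_interval_sub_left
      (hg.intervalIntegrable _ _) (hg.intervalIntegrable _ _), add_comm a, add_comm b]
  rw [hsplit, add_comm b, add_comm a]
  exact ((hprim _).comp_add_const x b).sub ((hprim _).comp_add_const x a)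

theorem hasDerivAt_integral_mul_comp_add {f : ℝ → ℝ} (hf : Continuous f) (a b c x : ℝ) :
    HasDerivAt (fun u => ∫ t in a..b, (t + c) * f (t + u))
      ((b + c) * f (b + x) - (a + c) * f (a + x) - ∫ t in a..b, f (t + x)) x := by
  have hsplit : (fun u => ∫ t in a..b, (t + c) * f (t + u)) =
      fun u => (∫ t in a..b, (t + u + c) * f (t + u)) - u * ∫ t in a..b, f (t + u) := by
    funext u
    rw [← integral_const_mul, ← integral_sub (Continuous.intervalIntegrable (by fun_prop) _ _)
      (Continuous.intervalIntegrable (by fun_prop) _ _)]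
    congr 1; funext t; ring
  rw [hsplit]
  refine ((hasDerivAt_integral_comp_add (g := fun s => (s + c) * f s) (by fun_prop) a b x).sub
    ((hasDerivAt_id x).mul (hasDerivAt_integral_comp_add hf a b x))).congr_deriv ?_
  simp only [id]
  ring

theorem statement0_general (n : ℕ) (V : (Fin n → ℝ) → (Fin n → ℝ))
    (Φ : ℝ → (Fin n → ℝ) → (Fin n → ℝ))
    (hΦ0 : ∀ ρ, Φ 0 ρ = ρ)
    (hΦflow : ∀ s t ρ, Φ (s + t) ρ = Φ s (Φ t ρ))
    (hΦderiv : ∀ (t : ℝ) (ρ : Fin n → ℝ), HasDerivAt (fun s => Φ s ρ) (V (Φ t ρ)) t)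
    (T : ℝ) (hT : 0 < T)
    (q : (Fin n → ℝ) → ℝ) (hq : Continuous q)
    (qavg G₀ : (Fin n → ℝ) → ℝ)
    (hqavg : ∀ ρ, qavg ρ = (1 / T) * ∫ t in (-(T/2))..(T/2), q (Φ t ρ))
    (hG₀ : ∀ ρ, G₀ ρ = (1 / T) *
      ((∫ t in (-(T/2))..(0:ℝ), (t + T/2) * q (Φ t ρ)) +
       ∫ t in (0:ℝ)..(T/2), (t - T/2) * q (Φ t ρ)))
    (ρ : Fin n → ℝ) :
    HasDerivAt (fun u => G₀ (Φ u ρ)) (q ρ - qavg ρ) 0 := by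
  have hf : Continuous fun s => q (Φ s ρ) :=
    hq.comp (continuous_iff_continuousAt.2 fun t => (hΦderiv t ρ).continuousAt)
  have hG₀_orbit : (fun u => G₀ (Φ u ρ)) = fun u => (1 / T) *
      ((∫ t in (-(T/2))..(0:ℝ), (t + T/2) * q (Φ (t + u) ρ)) +
       ∫ t in (0:ℝ)..(T/2), (t + -(T/2)) * q (Φ (t + u) ρ)) := by
    funext u
    simp only [hG₀, hΦflow, sub_eq_add_neg]
  rw [hG₀_orbit]
  refine (((hasDerivAt_integral_mul_comp_add hf _ _ _ 0).add
    (hasDerivAt_integral_mul_comp_add hf _ _ _ 0)).const_mul (1 / T)).congr_deriv ?_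
  simp only [add_zero, neg_add_cancel, zero_mul, sub_zero, add_neg_cancel, hqavg, hΦ0]
  rw [← integral_add_adjacent_intervals (hf.intervalIntegrable (-(T/2)) 0)
    (hf.intervalIntegrable 0 (T/2))]
  field_simp
  ring

/-- For a `C¹` vector field `V` on `ℝⁿ` with a global `T`-periodic flow `Φ`,
a continuous `q`, the function `G₀` defined by the weighted trajectory integral satisfies
`H_V G₀ = q - ⟨q⟩`, i.e. `u ↦ G₀(Φ_u ρ)` has derivative `q ρ - ⟨q⟩ ρ` at `u = 0`. -/
theorem statement0 (n : ℕ) (V : (Fin n → ℝ) → (Fin n → ℝ)) (hV : ContDiff ℝ 1 V)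
    (Φ : ℝ → (Fin n → ℝ) → (Fin n → ℝ))
    (hΦ0 : ∀ ρ, Φ 0 ρ = ρ)
    (hΦflow : ∀ s t ρ, Φ (s + t) ρ = Φ s (Φ t ρ))
    (hΦderiv : ∀ (t : ℝ) (ρ : Fin n → ℝ), HasDerivAt (fun s => Φ s ρ) (V (Φ t ρ)) t)
    (T : ℝ) (hT : 0 < T)
    (hper : ∀ (t : ℝ) (ρ : Fin n → ℝ), Φ (t + T) ρ = Φ t ρ)
    (q : (Fin n → ℝ) → ℝ) (hq : Continuous q)
    (qavg G₀ : (Fin n → ℝ) → ℝ)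
    (hqavg : ∀ ρ, qavg ρ = (1 / T) * ∫ t in (-(T/2))..(T/2), q (Φ t ρ))
    (hG₀ : ∀ ρ, G₀ ρ = (1 / T) *
      ((∫ t in (-(T/2))..(0:ℝ), (t + T/2) * q (Φ t ρ)) +
       ∫ t in (0:ℝ)..(T/2), (t - T/2) * q (Φ t ρ)))
    (ρ : Fin n → ℝ) :
    HasDerivAt (fun u => G₀ (Φ u ρ)) (q ρ - qavg ρ) 0 :=
  statement0_general n V Φ hΦ0 hΦflow hΦderiv T hT q hq qavg G₀ hqavg hG₀ ρ
end

section
/- Let λ₁, λ₂ ∈ ℝ and let T > 0 satisfy λ_j T ∈ 2πℤ for j = 1, 2. Then for every multi-index α = (α₁, α₂) ∈ ℕ² and every (x₁, x₂, ξ₁, ξ₂) ∈ ℝ⁴, the trajectory average of the monomial x^α along the rotation flow satisfies (1/T) ∫₀^T ∏_{j=1,2} ( x_j cos(λ_j t) + ξ_j sin(λ_j t) )^{α_j} dt = 2^{−(α₁+α₂)} Σ_k C(α₁, k₁) C(α₂, k₂) ∏_{j=1,2} (x_j − i ξ_j)^{k_j} (x_j + i ξ_j)^{α_j − k_j}, where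 the sum ranges over k = (k₁, k₂) ∈ ℕ² with k_j ≤ α_j and (2k₁ − α₁)λ₁ + (2k₂ − α₂)λ₂ = 0, C(n, m) denotes the binomial coefficient, and the right-hand side (a priori a complex number) equals the real integral on the left. -/
open Real Finset

lemma lem1 (x ξ l t : ℝ) :
    ((x * Real.cos (l*t) + ξ * Real.sin (l*t) : ℝ) : ℂ)
      = (((x:ℂ) - Complex.I*ξ) * Complex.exp (↑(l*t) * Complex.I)
          + ((x:ℂ) + Complex.I*ξ) * Complex.exp (-↑(l*t) * Complex.I)) / 2 := by
  rw [Complex.exp_mul_I, Complex.exp_mul_I, Complex.cos_neg, Complex.sin_neg]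
  push_cast [Complex.ofReal_sin, Complex.ofReal_cos]
  linear_combination (↑ξ * Complex.sin (↑l * ↑t) : ℂ) * Complex.I_sq

lemma factor_expand (x ξ l t : ℝ) (n : ℕ) :
    ((x * Real.cos (l*t) + ξ * Real.sin (l*t) : ℝ) : ℂ) ^ n
      = ∑ k ∈ range (n+1), ((2:ℂ)^n)⁻¹ * (Nat.choose n k : ℂ)
          * ((x:ℂ) - Complex.I*ξ)^k * ((x:ℂ) + Complex.I*ξ)^(n-k)
          * Complex.exp (↑((2*(k:ℝ)-n)*l * t) * Complex.I) := by
  rw [lem1, div_pow, add_pow, Finset.sum_div]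
  refine Finset.sum_congr rfl fun k hk => ?_
  have hk' : k ≤ n := Nat.lt_succ_iff.mp (Finset.mem_range.mp hk)
  rw [mul_pow, mul_pow, ← Complex.exp_nat_mul, ← Complex.exp_nat_mul]
  have hexp : Complex.exp (↑k * (↑(l*t) * Complex.I)) * Complex.exp (↑(n-k) * (-↑(l*t) * Complex.I))
      = Complex.exp (↑((2*(k:ℝ)-n)*l * t) * Complex.I) := by
    rw [← Complex.exp_add]
    congr 1
    push_cast [Nat.cast_sub hk']
    ring
  rw [div_eq_mul_inv, ← hexp]
  ring

lemma key (μ T : ℝ) (h : ∃ m : ℤ, μ * T = 2*π*m) :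
    ∫ t in (0:ℝ)..T, Complex.exp (↑(μ * t) * Complex.I) = if μ = 0 then (T:ℂ) else 0 := by
  by_cases hμ : μ = 0
  · simp [hμ]
  · rw [if_neg hμ]
    have hc : (↑μ * Complex.I : ℂ) ≠ 0 := by
      simp [Complex.ext_iff, hμ]
    have : ∀ t : ℝ, (↑(μ * t) * Complex.I : ℂ) = (↑μ * Complex.I) * t := by
      intro t; push_cast; ring
    simp_rw [this]
    rw [integral_exp_mul_complex hc]
    obtain ⟨m, hm⟩ := h
    have : (↑μ * Complex.I * ↑T : ℂ) = ↑m * (2 * ↑π * Complex.I) := by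
      rw [show (↑μ * Complex.I * ↑T : ℂ) = ↑(μ*T) * Complex.I by push_cast; ring, hm]
      push_cast; ring
    rw [this, Complex.exp_int_mul_two_pi_mul_I]
    simp

set_option maxHeartbeats 2000000 in
open Classical in
theorem statement8 (l1 l2 T : ℝ) (hT : 0 < T)
    (h1 : ∃ m : ℤ, l1 * T = 2 * π * m) (h2 : ∃ m : ℤ, l2 * T = 2 * π * m)
    (α1 α2 : ℕ) (x1 x2 xi1 xi2 : ℝ) :
    ((1 / T * ∫ t in (0:ℝ)..T,
        (x1 * cos (l1 * t) + xi1 * sin (l1 * t)) ^ α1 *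
        (x2 * cos (l2 * t) + xi2 * sin (l2 * t)) ^ α2 : ℝ) : ℂ)
      = ((2 : ℂ) ^ (α1 + α2))⁻¹ *
        ∑ k1 ∈ range (α1 + 1), ∑ k2 ∈ range (α2 + 1),
          (if (2 * (k1 : ℝ) - α1) * l1 + (2 * (k2 : ℝ) - α2) * l2 = 0 then
            (Nat.choose α1 k1 : ℂ) * (Nat.choose α2 k2 : ℂ) *
            ((x1 : ℂ) - Complex.I * (xi1 : ℂ)) ^ k1 *
            ((x1 : ℂ) + Complex.I * (xi1 : ℂ)) ^ (α1 - k1) *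
            ((x2 : ℂ) - Complex.I * (xi2 : ℂ)) ^ k2 *
            ((x2 : ℂ) + Complex.I * (xi2 : ℂ)) ^ (α2 - k2)
          else 0) := by
  have hT' : (T:ℂ) ≠ 0 := by exact_mod_cast hT.ne'
  set A1 : ℂ := (x1:ℂ) - Complex.I*xi1 with hA1
  set B1 : ℂ := (x1:ℂ) + Complex.I*xi1 with hB1
  set A2 : ℂ := (x2:ℂ) - Complex.I*xi2 with hA2
  set B2 : ℂ := (x2:ℂ) + Complex.I*xi2 with hB2
  set μ : ℕ → ℕ → ℝ := fun k1 k2 => (2*(k1:ℝ)-α1)*l1 + (2*(k2:ℝ)-α2)*l2 with hμ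
  set c : ℕ → ℕ → ℂ := fun k1 k2 =>
    ((2:ℂ)^α1)⁻¹ * (Nat.choose α1 k1 : ℂ) * A1^k1 * B1^(α1-k1) *
    (((2:ℂ)^α2)⁻¹ * (Nat.choose α2 k2 : ℂ) * A2^k2 * B2^(α2-k2)) with hc
  have step1 : ∀ t : ℝ,
      (((x1 * cos (l1 * t) + xi1 * sin (l1 * t)) ^ α1 *
        (x2 * cos (l2 * t) + xi2 * sin (l2 * t)) ^ α2 : ℝ) : ℂ)
      = ∑ k1 ∈ range (α1+1), ∑ k2 ∈ range (α2+1),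
          c k1 k2 * Complex.exp (↑(μ k1 k2 * t) * Complex.I) := by
    intro t
    rw [Complex.ofReal_mul, Complex.ofReal_pow, Complex.ofReal_pow,
        factor_expand x1 xi1 l1 t α1, factor_expand x2 xi2 l2 t α2,
        Finset.sum_mul_sum]
    refine Finset.sum_congr rfl fun k1 _ => Finset.sum_congr rfl fun k2 _ => ?_
    rw [hc]
    have : Complex.exp (↑((2*(k1:ℝ)-α1)*l1 * t) * Complex.I) *
          Complex.exp (↑((2*(k2:ℝ)-α2)*l2 * t) * Complex.I)
        = Complex.exp (↑(μ k1 k2 * t) * Complex.I) := by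
      rw [← Complex.exp_add]
      congr 1
      push_cast [hμ]
      ring
    rw [← this]
    ring
  have hint : ∀ (k1 k2 : ℕ), IntervalIntegrable
      (fun t => c k1 k2 * Complex.exp (↑(μ k1 k2 * t) * Complex.I)) MeasureTheory.volume 0 T := by
    intro k1 k2
    apply Continuous.intervalIntegrable
    fun_prop
  have hkey : ∀ k1 k2 : ℕ, (∫ t in (0:ℝ)..T, Complex.exp (↑(μ k1 k2 * t) * Complex.I))
      = if μ k1 k2 = 0 then (T:ℂ) else 0 := by
    intro k1 k2
    apply key
    obtain ⟨m1, hm1⟩ := h1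
    obtain ⟨m2, hm2⟩ := h2
    refine ⟨(2*(k1:ℤ)-α1)*m1 + (2*(k2:ℤ)-α2)*m2, ?_⟩
    push_cast [hμ]
    linear_combination (2*(k1:ℝ)-α1)*hm1 + (2*(k2:ℝ)-α2)*hm2
  have hswap : ∀ k1 : ℕ,
      (∫ t in (0:ℝ)..T, ∑ k2 ∈ range (α2+1), c k1 k2 * Complex.exp (↑(μ k1 k2 * t) * Complex.I))
        = ∑ k2 ∈ range (α2+1), c k1 k2 * (if μ k1 k2 = 0 then (T:ℂ) else 0) := by
    intro k1
    rw [intervalIntegral.integral_finset_sum (fun k2 _ => hint k1 k2)]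
    exact Finset.sum_congr rfl fun k2 _ => by
      rw [intervalIntegral.integral_const_mul, hkey k1 k2]
  have hint2 : ∀ k1 : ℕ, IntervalIntegrable
      (fun t => ∑ k2 ∈ range (α2+1), c k1 k2 * Complex.exp (↑(μ k1 k2 * t) * Complex.I))
      MeasureTheory.volume 0 T := by
    intro k1
    apply Continuous.intervalIntegrable
    fun_prop
  have hsum1 : (∫ t in (0:ℝ)..T, ∑ k1 ∈ range (α1+1), ∑ k2 ∈ range (α2+1),
        c k1 k2 * Complex.exp (↑(μ k1 k2 * t) * Complex.I))
      = ∑ k1 ∈ range (α1+1), ∫ t in (0:ℝ)..T, ∑ k2 ∈ range (α2+1),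
        c k1 k2 * Complex.exp (↑(μ k1 k2 * t) * Complex.I) :=
    intervalIntegral.integral_finset_sum (fun k1 _ => hint2 k1)
  rw [Complex.ofReal_mul, ← intervalIntegral.integral_ofReal]
  rw [intervalIntegral.integral_congr (g := fun t => ∑ k1 ∈ range (α1+1), ∑ k2 ∈ range (α2+1),
          c k1 k2 * Complex.exp (↑(μ k1 k2 * t) * Complex.I)) (fun t _ => step1 t)]
  rw [hsum1]
  simp_rw [hswap]
  simp only [Finset.mul_sum]
  refine Finset.sum_congr rfl fun k1 _ => ?_
  refine Finset.sum_congr rfl fun k2 _ => ?_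
  rw [hc]
  by_cases h : μ k1 k2 = 0
  · rw [if_pos h, if_pos (by rw [hμ] at h; exact h)]
    rw [pow_add]
    push_cast
    field_simp
  · rw [if_neg h, if_neg (by rw [hμ] at h; exact h)]
    simp
end

section
/- Let E = { (x₁, x₂, ξ₁, ξ₂) ∈ ℝ⁴ : ½(x₁² + ξ₁²) + (x₂² + ξ₂²) = 1 } and q(x, ξ) = ¼ ( (x₁² − ξ₁²) x₂ + 2 x₁ ξ₁ ξ₂ ). Then the maximum of q on E equals √3/9 = 1/(3√3) and the minimum equals −√3/9; both are attained. Moreover, for (x, ξ) ∈ E one has q(x, ξ) = √3/9 if and only if x₁² + ξ₁² = 4/3, x₂² + ξ₂² = 1/3 and (x₁² − ξ₁²) x₂ + 2 x₁ ξ₁ ξ₂ = 4√3/9 (so the maximum is attained exactly along a circle, which is a single closed trajectory of the flow), and similarly q attains −√3/9 exactly on the circle where x₁² + ξ₁² = 4/3, x₂² + ξ₂² = 1/3 and (x₁² − ξ₁²) x₂ + 2 x₁ ξ₁ ξ₂ = −4√3/9. -/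
/-- The trajectory average `q(x,ξ) = ¼((x₁² − ξ₁²)x₂ + 2x₁ξ₁ξ₂)`. -/
noncomputable def qavg12 (x1 x2 xi1 xi2 : ℝ) : ℝ :=
  (1 / 4) * ((x1 ^ 2 - xi1 ^ 2) * x2 + 2 * x1 * xi1 * xi2)

/-- Membership in the energy surface `E = {p₂ = 1}` for `p₂ = ½(x₁²+ξ₁²) + (x₂²+ξ₂²)`. -/
def onE12 (x1 x2 xi1 xi2 : ℝ) : Prop :=
  (1 / 2) * (x1 ^ 2 + xi1 ^ 2) + (x2 ^ 2 + xi2 ^ 2) = 1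

lemma cubic_bound12 (u : ℝ) (h1 : u ≤ 1) :
    (2 - 2*u)^2 * u ≤ 16/27 := by
  nlinarith [mul_nonneg (sq_nonneg (u - 1/3)) (by linarith : (0:ℝ) ≤ 4/3 - u)]

lemma Tsq_le12 (x1 x2 xi1 xi2 : ℝ)
    (h : (1 / 2) * (x1 ^ 2 + xi1 ^ 2) + (x2 ^ 2 + xi2 ^ 2) = 1) :
    ((x1 ^ 2 - xi1 ^ 2) * x2 + 2 * x1 * xi1 * xi2) ^ 2 ≤ 16 / 27 := by
  have hu : x2 ^ 2 + xi2 ^ 2 ≤ 1 := by nlinarith [sq_nonneg x1, sq_nonneg xi1]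
  have hCS : ((x1 ^ 2 - xi1 ^ 2) * x2 + 2 * x1 * xi1 * xi2) ^ 2 ≤
      (x1 ^ 2 + xi1 ^ 2) ^ 2 * (x2 ^ 2 + xi2 ^ 2) := by
    nlinarith [sq_nonneg ((x1 ^ 2 - xi1 ^ 2) * xi2 - 2 * x1 * xi1 * x2)]
  have hr : x1 ^ 2 + xi1 ^ 2 = 2 - 2 * (x2 ^ 2 + xi2 ^ 2) := by linarith
  rw [hr] at hCS
  have := cubic_bound12 (x2 ^ 2 + xi2 ^ 2) hu
  linarith

lemma eq_case12 (x1 x2 xi1 xi2 : ℝ)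
    (h : (1 / 2) * (x1 ^ 2 + xi1 ^ 2) + (x2 ^ 2 + xi2 ^ 2) = 1)
    (hT : ((x1 ^ 2 - xi1 ^ 2) * x2 + 2 * x1 * xi1 * xi2) ^ 2 = 16 / 27) :
    x2 ^ 2 + xi2 ^ 2 = 1 / 3 := by
  have hu : x2 ^ 2 + xi2 ^ 2 ≤ 1 := by nlinarith [sq_nonneg x1, sq_nonneg xi1]
  have hCS : ((x1 ^ 2 - xi1 ^ 2) * x2 + 2 * x1 * xi1 * xi2) ^ 2 ≤
      (x1 ^ 2 + xi1 ^ 2) ^ 2 * (x2 ^ 2 + xi2 ^ 2) := by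
    nlinarith [sq_nonneg ((x1 ^ 2 - xi1 ^ 2) * xi2 - 2 * x1 * xi1 * x2)]
  have hr : x1 ^ 2 + xi1 ^ 2 = 2 - 2 * (x2 ^ 2 + xi2 ^ 2) := by linarith
  rw [hr, hT] at hCS
  set u := x2 ^ 2 + xi2 ^ 2 with hu0
  have hun : 0 ≤ u := by positivity
  have hsq : (u - 1/3)^2 * (4/3 - u) ≤ 0 := by nlinarith
  have h2 : (u - 1/3)^2 ≤ 0 := by nlinarith [sq_nonneg (u - 1/3)]
  have : u - 1/3 = 0 := by nlinarith [sq_nonneg (u - 1/3)]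
  linarith

lemma sqrt3_mul_self12 : Real.sqrt 3 * Real.sqrt 3 = 3 :=
  Real.mul_self_sqrt (by norm_num)

lemma sqrt3_pos12 : (0:ℝ) < Real.sqrt 3 := Real.sqrt_pos.mpr (by norm_num)

lemma T_le12 (x1 x2 xi1 xi2 : ℝ)
    (h : (1 / 2) * (x1 ^ 2 + xi1 ^ 2) + (x2 ^ 2 + xi2 ^ 2) = 1) :
    (x1 ^ 2 - xi1 ^ 2) * x2 + 2 * x1 * xi1 * xi2 ≤ 4 * Real.sqrt 3 / 9 := by
  have h1 := Tsq_le12 x1 x2 xi1 xi2 h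
  have hs := sqrt3_mul_self12
  have hp := sqrt3_pos12
  have hc : (4 * Real.sqrt 3 / 9) ^ 2 = 16/27 := by
    have hsq : Real.sqrt 3 ^ 2 = 3 := by rw [sq]; exact hs
    rw [div_pow, mul_pow, hsq]; norm_num
  nlinarith [hp.le]

/-- On `E = p₂⁻¹(1)`, the maximum of `q` is `√3/9 = 1/(3√3)` and the
minimum is `−√3/9`, both attained, and each extremum is attained exactly on the circle
`x₁² + ξ₁² = 4/3`, `x₂² + ξ₂² = 1/3`, `(x₁² − ξ₁²)x₂ + 2x₁ξ₁ξ₂ = ±4√3/9`. -/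
theorem statement14 :
    Real.sqrt 3 / 9 = 1 / (3 * Real.sqrt 3) ∧
    (∀ x1 x2 xi1 xi2 : ℝ, onE12 x1 x2 xi1 xi2 →
      qavg12 x1 x2 xi1 xi2 ≤ Real.sqrt 3 / 9) ∧
    (∃ x1 x2 xi1 xi2 : ℝ, onE12 x1 x2 xi1 xi2 ∧
      qavg12 x1 x2 xi1 xi2 = Real.sqrt 3 / 9) ∧
    (∀ x1 x2 xi1 xi2 : ℝ, onE12 x1 x2 xi1 xi2 →
      -(Real.sqrt 3 / 9) ≤ qavg12 x1 x2 xi1 xi2) ∧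
    (∃ x1 x2 xi1 xi2 : ℝ, onE12 x1 x2 xi1 xi2 ∧
      qavg12 x1 x2 xi1 xi2 = -(Real.sqrt 3 / 9)) ∧
    (∀ x1 x2 xi1 xi2 : ℝ, onE12 x1 x2 xi1 xi2 →
      (qavg12 x1 x2 xi1 xi2 = Real.sqrt 3 / 9 ↔
        x1 ^ 2 + xi1 ^ 2 = 4 / 3 ∧ x2 ^ 2 + xi2 ^ 2 = 1 / 3 ∧
        (x1 ^ 2 - xi1 ^ 2) * x2 + 2 * x1 * xi1 * xi2 = 4 * Real.sqrt 3 / 9)) ∧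
    (∀ x1 x2 xi1 xi2 : ℝ, onE12 x1 x2 xi1 xi2 →
      (qavg12 x1 x2 xi1 xi2 = -(Real.sqrt 3 / 9) ↔
        x1 ^ 2 + xi1 ^ 2 = 4 / 3 ∧ x2 ^ 2 + xi2 ^ 2 = 1 / 3 ∧
        (x1 ^ 2 - xi1 ^ 2) * x2 + 2 * x1 * xi1 * xi2 = -(4 * Real.sqrt 3 / 9))) := by
  have hs := sqrt3_mul_self12
  have hp := sqrt3_pos12
  -- lower bound via symmetry
  have Tge : ∀ x1 x2 xi1 xi2 : ℝ, onE12 x1 x2 xi1 xi2 →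
      -(4 * Real.sqrt 3 / 9) ≤ (x1 ^ 2 - xi1 ^ 2) * x2 + 2 * x1 * xi1 * xi2 := by
    intro x1 x2 xi1 xi2 h
    have h' : (1 / 2) * (x1 ^ 2 + xi1 ^ 2) + ((-x2) ^ 2 + (-xi2) ^ 2) = 1 := by
      unfold onE12 at h; ring_nf; ring_nf at h; linarith
    have := T_le12 x1 (-x2) xi1 (-xi2) h'
    nlinarith
  -- witnesses
  have hwit : ∀ s : ℝ, s = 1 ∨ s = -1 →
      onE12 (2 * Real.sqrt 3 / 3) (s * Real.sqrt 3 / 3) 0 0 ∧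
      qavg12 (2 * Real.sqrt 3 / 3) (s * Real.sqrt 3 / 3) 0 0 = s * (Real.sqrt 3 / 9) := by
    intro s hs1
    have hss : s ^ 2 = 1 := by rcases hs1 with h | h <;> rw [h] <;> norm_num
    constructor
    · unfold onE12
      linear_combination (2/9 + s^2/9) * hs + (1/3) * hss
    · unfold qavg12
      linear_combination (s * Real.sqrt 3 / 27) * hs
  refine ⟨?_, ?_, ?_, ?_, ?_, ?_, ?_⟩
  · rw [eq_div_iff (by positivity : (3:ℝ) * Real.sqrt 3 ≠ 0)]
    linear_combination (1/3) * hs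
  · intro x1 x2 xi1 xi2 h
    have := T_le12 x1 x2 xi1 xi2 h
    unfold qavg12; linarith
  · obtain ⟨h1, h2⟩ := hwit 1 (Or.inl rfl)
    exact ⟨_, _, _, _, h1, by rw [h2]; ring⟩
  · intro x1 x2 xi1 xi2 h
    have := Tge x1 x2 xi1 xi2 h
    unfold qavg12; linarith
  · obtain ⟨h1, h2⟩ := hwit (-1) (Or.inr rfl)
    exact ⟨_, _, _, _, h1, by rw [h2]; ring⟩
  · intro x1 x2 xi1 xi2 h
    constructor
    · intro hq
      unfold qavg12 at hq
      have hT : (x1 ^ 2 - xi1 ^ 2) * x2 + 2 * x1 * xi1 * xi2 = 4 * Real.sqrt 3 / 9 := by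
        linarith
      have hT2 : ((x1 ^ 2 - xi1 ^ 2) * x2 + 2 * x1 * xi1 * xi2) ^ 2 = 16 / 27 := by
        rw [hT]; linear_combination (16/81) * hs
      have hu := eq_case12 x1 x2 xi1 xi2 h hT2
      exact ⟨by unfold onE12 at h; linarith, hu, hT⟩
    · rintro ⟨-, -, hT⟩
      unfold qavg12; rw [hT]; ring
  · intro x1 x2 xi1 xi2 h
    constructor
    · intro hq
      unfold qavg12 at hq
      have hT : (x1 ^ 2 - xi1 ^ 2) * x2 + 2 * x1 * xi1 * xi2 = -(4 * Real.sqrt 3 / 9) := by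
        linarith
      have hT2 : ((x1 ^ 2 - xi1 ^ 2) * x2 + 2 * x1 * xi1 * xi2) ^ 2 = 16 / 27 := by
        rw [hT]; linear_combination (16/81) * hs
      have hu := eq_case12 x1 x2 xi1 xi2 h hT2
      exact ⟨by unfold onE12 at h; linarith, hu, hT⟩
    · rintro ⟨-, -, hT⟩
      unfold qavg12; rw [hT]; ring
end
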